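/- arXiv:2510.21752 — 4 statements merged into one kernel-verified Lean document; each statement's English description precedes it below -/
import Mathlib

section
/- Let N be a normal bounded operator and A a bounded operator on a Hilbert space H such that whenever AX = XN for bounded X one has A*X = XN* (Fuglede–Putnam property for the pair (A,N)). Then the equation NX - XA = C has a bounded solution X if and only if the block matrices [[N, 0], [0, A]] and [[N, C], [0, A]] are similar operators on H ⊕ H. -/
/-!
If `N X - X A = C`, conjugating `[[N, 0], [0, A]]` by `[[1, X], [0, 1]]` gives `[[N, C], [0, A]]`.
Conversely, if `W = [[W₁, W₂], [W₃, W₄]]` intertwines the two block operators, then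
`N W₁ = W₁ N` and `A W₃ = W₃ N`; Fuglede's theorem and the Fuglede–Putnam hypothesis give the same
relations for `N*` and `A*`, so `W₁* N = N W₁*` and `W₃* A = N W₃*`. Hence `D = W₁* W₁ + W₃* W₃`
commutes with `N` and `E = W₁* W₂ + W₃* W₄` satisfies `N E = D C + E A`. Since `W` is invertible,
its first column is bounded below, which makes `D` invertible, and `X = D⁻¹ E` solves the equation.
-/

open ContinuousLinearMap

variable {H : Type*} [NormedAddCommGroup H] [InnerProductSpace ℂ H] [CompleteSpace H]

/-- The block operator `[[Q, R], [S, T]]` on `H ⊕ H`, `(x, y) ↦ (Qx + Ry, Sx + Ty)`. -/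
noncomputable def blockOp (Q R S T : H →L[ℂ] H) : (H × H) →L[ℂ] (H × H) :=
  ((Q.comp (ContinuousLinearMap.fst ℂ H H) + R.comp (ContinuousLinearMap.snd ℂ H H))).prod
    ((S.comp (ContinuousLinearMap.fst ℂ H H) + T.comp (ContinuousLinearMap.snd ℂ H H)))

-- `blockOp` carries `[CompleteSpace H]`, so every lemma about it does too.
set_option linter.unusedSectionVars false

section Algebra

variable {R : Type*} [Ring R]

theorem exists_mul_sub_mul_eq_of_isUnit {N A C D E : R} (hD : IsUnit D) (hND : Commute N D)
    (hE : N * E = D * C + E * A) : ∃ X, N * X - X * A = C := by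
  obtain ⟨D, rfl⟩ := hD
  refine ⟨↑D⁻¹ * E, ?_⟩
  calc N * (↑D⁻¹ * E) - ↑D⁻¹ * E * A = ↑D⁻¹ * (N * E - E * A) := by
        rw [← mul_assoc, hND.units_inv_right.eq, mul_sub, mul_assoc, mul_assoc]
    _ = C := by rw [hE, add_sub_cancel_right, Units.inv_mul_cancel_left]

theorem commute_and_mul_eq_of_intertwining [StarRing R] {N A C W₁ W₂ W₃ W₄ : R}
    (h₁ : N * W₁ = W₁ * N) (h₁' : star N * W₁ = W₁ * star N)
    (h₂ : N * W₂ = W₁ * C + W₂ * A)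
    (h₃ : A * W₃ = W₃ * N) (h₃' : star A * W₃ = W₃ * star N)
    (h₄ : A * W₄ = W₃ * C + W₄ * A) :
    Commute N (star W₁ * W₁ + star W₃ * W₃) ∧
      N * (star W₁ * W₂ + star W₃ * W₄) =
        (star W₁ * W₁ + star W₃ * W₃) * C + (star W₁ * W₂ + star W₃ * W₄) * A := by
  have s₁ : star W₁ * N = N * star W₁ := by simpa using congrArg star h₁'
  have s₃ : star W₃ * A = N * star W₃ := by simpa using congrArg star h₃'
  have d₁ : N * (star W₁ * W₁) = star W₁ * W₁ * N := by
    rw [← mul_assoc, ← s₁, mul_assoc, h₁, mul_assoc]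
  have d₃ : N * (star W₃ * W₃) = star W₃ * W₃ * N := by
    rw [← mul_assoc, ← s₃, mul_assoc, h₃, mul_assoc]
  have e₁ : N * (star W₁ * W₂) = star W₁ * W₁ * C + star W₁ * W₂ * A := by
    rw [← mul_assoc, ← s₁, mul_assoc, h₂, mul_add, ← mul_assoc, ← mul_assoc]
  have e₃ : N * (star W₃ * W₄) = star W₃ * W₃ * C + star W₃ * W₄ * A := by
    rw [← mul_assoc, ← s₃, mul_assoc, h₄, mul_add, ← mul_assoc, ← mul_assoc]
  refine ⟨by rw [Commute, SemiconjBy, mul_add, add_mul, d₁, d₃], ?_⟩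
  rw [mul_add, e₁, e₃, add_mul, add_mul]
  abel

end Algebra

theorem isUnit_star_mul_self_add_star_mul_self {𝕜 E : Type*} [RCLike 𝕜] [NormedAddCommGroup E]
    [InnerProductSpace 𝕜 E] [CompleteSpace E] (P Q : E →L[𝕜] E) (K : NNReal)
    (h : ∀ x, ‖x‖ ≤ K * max ‖P x‖ ‖Q x‖) : IsUnit (star P * P + star Q * Q) := by
  refine isUnit_of_forall_le_norm_inner_map _ (c := (K ^ 2 + 1)⁻¹) (by positivity) fun x => ?_
  have hinner : inner 𝕜 ((star P * P + star Q * Q) x) x = ((‖P x‖ ^ 2 + ‖Q x‖ ^ 2 : ℝ) : 𝕜) := by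
    simp [star_eq_adjoint, inner_add_left, adjoint_inner_left, inner_self_eq_norm_sq_to_K]
  have hmax : max ‖P x‖ ‖Q x‖ ^ 2 ≤ ‖P x‖ ^ 2 + ‖Q x‖ ^ 2 := by
    rcases max_cases ‖P x‖ ‖Q x‖ with ⟨h', -⟩ | ⟨h', -⟩ <;> rw [h'] <;>
      linarith [sq_nonneg ‖P x‖, sq_nonneg ‖Q x‖]
  have hx : ‖x‖ ^ 2 ≤ (K ^ 2 + 1) * max ‖P x‖ ‖Q x‖ ^ 2 := by
    nlinarith [h x, norm_nonneg x, sq_nonneg (max ‖P x‖ ‖Q x‖)]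
  rw [hinner, RCLike.norm_ofReal, abs_of_nonneg (by positivity), NNReal.coe_inv]
  push_cast
  rw [mul_inv_le_iff₀ (by positivity)]
  nlinarith

theorem blockOp_apply (Q R S T : H →L[ℂ] H) (z : H × H) :
    blockOp Q R S T z = (Q z.1 + R z.2, S z.1 + T z.2) := rfl

theorem blockOp_mul (Q R S T Q' R' S' T' : H →L[ℂ] H) :
    blockOp Q R S T * blockOp Q' R' S' T' =
      blockOp (Q * Q' + R * S') (Q * R' + R * T') (S * Q' + T * S') (S * R' + T * T') := by
  ext z <;> simp [blockOp_apply]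

theorem blockOp_one : blockOp (1 : H →L[ℂ] H) 0 0 1 = 1 := by
  ext z <;> simp [blockOp_apply]

theorem blockOp_inj {Q R S T Q' R' S' T' : H →L[ℂ] H} :
    blockOp Q R S T = blockOp Q' R' S' T' ↔ Q = Q' ∧ R = R' ∧ S = S' ∧ T = T' := by
  refine ⟨fun h => ?_, by rintro ⟨rfl, rfl, rfl, rfl⟩; rfl⟩
  have hl := fun x : H => congrArg (· (x, 0)) h
  have hr := fun y : H => congrArg (· (0, y)) h
  simp only [blockOp_apply, map_zero, add_zero, zero_add, Prod.mk.injEq] at hl hr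
  exact ⟨ext fun x => (hl x).1, ext fun y => (hr y).1, ext fun x => (hl x).2, ext fun y => (hr y).2⟩

theorem exists_eq_blockOp (M : (H × H) →L[ℂ] (H × H)) : ∃ Q R S T, M = blockOp Q R S T :=
  ⟨fst ℂ H H ∘L M ∘L inl ℂ H H, fst ℂ H H ∘L M ∘L inr ℂ H H,
    snd ℂ H H ∘L M ∘L inl ℂ H H, snd ℂ H H ∘L M ∘L inr ℂ H H, by
    ext z <;> simp [blockOp_apply, Prod.mk_zero_zero]⟩

theorem norm_le_mul_max_of_mul_blockOp_eq_one {V : (H × H) →L[ℂ] (H × H)}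
    {W₁ W₂ W₃ W₄ : H →L[ℂ] H} (h : V * blockOp W₁ W₂ W₃ W₄ = 1) (x : H) :
    ‖x‖ ≤ ‖V‖₊ * max ‖W₁ x‖ ‖W₃ x‖ :=
  calc ‖x‖ = ‖V (blockOp W₁ W₂ W₃ W₄ (x, 0))‖ := by
        rw [← mul_apply_eq_comp, h, one_apply_eq_self, Prod.norm_mk, norm_zero,
          max_eq_left (norm_nonneg x)]
    _ ≤ ‖V‖ * ‖blockOp W₁ W₂ W₃ W₄ (x, 0)‖ := V.le_opNorm _
    _ = ‖V‖₊ * max ‖W₁ x‖ ‖W₃ x‖ := by simp [blockOp_apply, Prod.norm_mk]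

noncomputable def unipotentBlockOp (X : H →L[ℂ] H) : ((H × H) →L[ℂ] (H × H))ˣ where
  val := blockOp 1 X 0 1
  inv := blockOp 1 (-X) 0 1
  val_inv := by simp [blockOp_mul, ← blockOp_one]
  inv_val := by simp [blockOp_mul, ← blockOp_one]

theorem unipotentBlockOp_conj {N A C X : H →L[ℂ] H} (hX : N * X - X * A = C) :
    ↑(unipotentBlockOp X)⁻¹ * blockOp N 0 0 A * ↑(unipotentBlockOp X) = blockOp N C 0 A := by
  simp [unipotentBlockOp, blockOp_mul, ← hX, sub_eq_add_neg]

theorem stmt2 (N A C : H →L[ℂ] H)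
    (hN : adjoint N * N = N * adjoint N)
    (hFP : ∀ X : H →L[ℂ] H, A * X = X * N → adjoint A * X = X * adjoint N) :
    (∃ X : H →L[ℂ] H, N * X - X * A = C) ↔
      ∃ W : ((H × H) →L[ℂ] (H × H))ˣ,
        (↑W⁻¹ : (H × H) →L[ℂ] (H × H)) * blockOp N 0 0 A * ↑W = blockOp N C 0 A := by
  refine ⟨fun ⟨X, hX⟩ => ⟨unipotentBlockOp X, unipotentBlockOp_conj hX⟩, fun ⟨W, hW⟩ => ?_⟩
  obtain ⟨W₁, W₂, W₃, W₄, hWb⟩ := exists_eq_blockOp (W : (H × H) →L[ℂ] (H × H))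
  have hint : blockOp N 0 0 A * blockOp W₁ W₂ W₃ W₄ = blockOp W₁ W₂ W₃ W₄ * blockOp N C 0 A := by
    rw [← hWb, ← hW, mul_assoc, W.mul_inv_cancel_left]
  simp only [blockOp_mul, blockOp_inj, zero_mul, mul_zero, add_zero, zero_add] at hint
  obtain ⟨h₁, h₂, h₃, h₄⟩ := hint
  have hNormal : IsStarNormal N := ⟨by rw [star_eq_adjoint]; exact hN⟩
  have h₁' : star N * W₁ = W₁ * star N := (hNormal.commute_star_left h₁).eq
  have h₃' : star A * W₃ = W₃ * star N := by simpa only [star_eq_adjoint] using hFP W₃ h₃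
  obtain ⟨hND, hNE⟩ := commute_and_mul_eq_of_intertwining h₁ h₁' h₂ h₃ h₃' h₄
  refine exists_mul_sub_mul_eq_of_isUnit ?_ hND hNE
  exact isUnit_star_mul_self_add_star_mul_self W₁ W₃ _
    (norm_le_mul_max_of_mul_blockOp_eq_one (hWb ▸ W.inv_mul))
end

section
/- If the pair (A, B) of invertible bounded Hilbert space operators satisfies the Fuglede–Putnam property, then the pair (A⁻¹, B⁻¹) also satisfies it. -/
open ContinuousLinearMap

variable {H : Type*} [NormedAddCommGroup H] [InnerProductSpace ℂ H] [CompleteSpace H]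

/-!
Multiplying `A⁻¹ X = X B⁻¹` by `A` on the left and by `B` on the right gives `A X = X B`, hence
`A* X = X B*`; multiplying this back by `(A*)⁻¹ = (A⁻¹)*` and `(B*)⁻¹ = (B⁻¹)*` gives
`(A⁻¹)* X = X (B⁻¹)*`. Only one-sided inverses and the anti-multiplicativity of `*` are involved.
-/

def FugledePutnam {R : Type*} [Mul R] [Star R] (a b : R) : Prop :=
  ∀ x : R, a * x = x * b → star a * x = x * star b

section Monoid

variable {M : Type*} [Monoid M]

theorem mul_eq_mul_of_mul_eq_one_of_mul_eq_one {p q r s x : M}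
    (hpq : p * q = 1) (hrs : r * s = 1) (h : q * x = x * r) : p * x = x * s :=
  calc p * x = p * (x * r) * s := by rw [mul_assoc p, mul_assoc x, hrs, mul_one]
    _ = x * s := by rw [← h, ← mul_assoc, hpq, one_mul]

theorem FugledePutnam.of_mul_eq_one [StarMul M] {a b a' b' : M} (hFP : FugledePutnam a b)
    (ha : a * a' = 1) (hb : b' * b = 1) : FugledePutnam a' b' := by
  intro x hx
  have hstar_a : star a' * star a = 1 := by rw [← star_mul, ha, star_one]
  have hstar_b : star b * star b' = 1 := by rw [← star_mul, hb, star_one]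
  exact mul_eq_mul_of_mul_eq_one_of_mul_eq_one hstar_a hstar_b
    (hFP x (mul_eq_mul_of_mul_eq_one_of_mul_eq_one ha hb hx))

end Monoid

theorem stmt7_general (A B A' B' : H →L[ℂ] H)
    (hA : A * A' = 1) (hB' : B' * B = 1)
    (hFP : ∀ X : H →L[ℂ] H, A * X = X * B → adjoint A * X = X * adjoint B) :
    ∀ X : H →L[ℂ] H, A' * X = X * B' → adjoint A' * X = X * adjoint B' :=
  FugledePutnam.of_mul_eq_one (a := A) (b := B) hFP hA hB'

theorem stmt7 (A B A' B' : H →L[ℂ] H)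
    (hA : A * A' = 1) (hA' : A' * A = 1) (hB : B * B' = 1) (hB' : B' * B = 1)
    (hFP : ∀ X : H →L[ℂ] H, A * X = X * B → adjoint A * X = X * adjoint B) :
    ∀ X : H →L[ℂ] H, A' * X = X * B' → adjoint A' * X = X * adjoint B' :=
  stmt7_general A B A' B' hA hB' hFP
end

section
/- Let A be an invertible bounded operator and B a bounded operator on a Banach space such that σ(A) ⊆ {z : |z| > ρ} and σ(B) ⊆ {z : |z| < ρ} for some ρ > 0. Then the series X = ∑_{n=0}^∞ A^{-n-1} Y B^n converges in operator norm for every bounded Y, and satisfies AX - XB = Y. -/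
/-!
By Gelfand's formula, `‖A⁻ⁿ‖ ≤ sⁿ` and `‖Bⁿ‖ ≤ ρⁿ` for large `n`, where `s < 1/ρ` bounds the
spectral radius of `A⁻¹` (whose spectrum consists of the inverses of the spectrum of `A`); so the
series is dominated by a convergent geometric series. Writing `Xₙ = A⁻ⁿ Y Bⁿ`, the terms of `A X`
and `X B` are `Xₙ` and `Xₙ₊₁`, so `A X - X B` telescopes to `X₀ = Y`.
-/

variable {E : Type*} [NormedAddCommGroup E] [NormedSpace ℂ E] [CompleteSpace E]

open Filter NNReal ENNReal

section BanachAlgebra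

variable {A : Type*} [NormedRing A] [NormedAlgebra ℂ A] [CompleteSpace A]

theorem eventually_norm_pow_le_of_spectralRadius_lt {a : A} {r : ℝ≥0}
    (h : spectralRadius ℂ a < r) : ∀ᶠ n : ℕ in atTop, ‖a ^ n‖ ≤ (r : ℝ) ^ n := by
  have hgelfand := spectrum.pow_nnnorm_pow_one_div_tendsto_nhds_spectralRadius a
  filter_upwards [hgelfand.eventually_lt_const h, eventually_gt_atTop 0] with n hn hn0
  rw [one_div, ENNReal.rpow_inv_lt_iff (by positivity), ENNReal.rpow_natCast] at hn
  exact_mod_cast hn.le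

theorem spectralRadius_lt_of_forall_nnnorm_lt {a : A} {r : ℝ≥0} (hr : 0 < r)
    (h : ∀ z ∈ spectrum ℂ a, ‖z‖₊ < r) : spectralRadius ℂ a < r := by
  rcases subsingleton_or_nontrivial A with _ | _
  · simpa [spectralRadius, spectrum.of_subsingleton] using hr
  · exact spectrum.spectralRadius_lt_of_forall_lt a h

theorem spectralRadius_inv_lt {u : Aˣ} {r : ℝ≥0} (hr : 0 < r)
    (h : ∀ z ∈ spectrum ℂ (u : A), r < ‖z‖₊) : spectralRadius ℂ (↑u⁻¹ : A) < ↑r⁻¹ := by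
  refine spectralRadius_lt_of_forall_nnnorm_lt (inv_pos.2 hr) fun z hz => ?_
  have hz0 : z ≠ 0 := spectrum.ne_zero_of_mem_of_unit hz
  have hz_inv : z⁻¹ ∈ spectrum ℂ (u : A) := by
    simpa using (spectrum.inv_mem_iff (r := Units.mk0 z hz0) (a := u⁻¹)).1 hz
  have hr_lt : r < ‖z‖₊⁻¹ := nnnorm_inv z ▸ h _ hz_inv
  exact (lt_inv_comm₀ hr (nnnorm_pos.2 hz0)).1 hr_lt

theorem summable_pow_mul_mul_pow {a b : A} (y : A) {r : ℝ≥0}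
    (ha : spectralRadius ℂ a < ↑r⁻¹) (hb : spectralRadius ℂ b < r) :
    Summable fun n : ℕ => a ^ n * y * b ^ n := by
  obtain ⟨s, has, hsr⟩ := ENNReal.lt_iff_exists_nnreal_btwn.1 ha
  have hr0 : r ≠ 0 := by rintro rfl; simp at hb
  have hsr1 : (s : ℝ) * r < 1 := by
    exact_mod_cast (NNReal.lt_inv_iff_mul_lt hr0).1 (by exact_mod_cast hsr)
  refine .of_norm_bounded_eventually_nat
    ((summable_geometric_of_lt_one (by positivity) hsr1).mul_left ‖y‖) ?_
  filter_upwards [eventually_norm_pow_le_of_spectralRadius_lt has,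
    eventually_norm_pow_le_of_spectralRadius_lt hb] with n han hbn
  calc ‖a ^ n * y * b ^ n‖ ≤ ‖a ^ n‖ * ‖y‖ * ‖b ^ n‖ := norm_mul₃_le
    _ ≤ (s : ℝ) ^ n * ‖y‖ * (r : ℝ) ^ n := by gcongr
    _ = ‖y‖ * ((s : ℝ) * r) ^ n := by ring

end BanachAlgebra

theorem mul_tsum_sub_tsum_mul_eq {R : Type*} [Ring R] [TopologicalSpace R] [IsTopologicalRing R]
    [T2Space R] {a a' b y : R} (ha : a * a' = 1)
    (hs : Summable fun n : ℕ => a' ^ (n + 1) * y * b ^ n) :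
    a * (∑' n : ℕ, a' ^ (n + 1) * y * b ^ n) - (∑' n : ℕ, a' ^ (n + 1) * y * b ^ n) * b = y := by
  have hleft (n : ℕ) : a * (a' ^ (n + 1) * y * b ^ n) = a' ^ n * y * b ^ n := by
    rw [pow_succ', ← mul_assoc, ← mul_assoc, ← mul_assoc, ha, one_mul, mul_assoc]
  have hright (n : ℕ) : a' ^ (n + 1) * y * b ^ n * b = a' ^ (n + 1) * y * b ^ (n + 1) := by
    rw [mul_assoc, ← pow_succ]
  have hs' : Summable fun n : ℕ => a' ^ n * y * b ^ n := by
    simpa only [hleft] using hs.mul_left a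
  rw [← hs.tsum_mul_left, ← hs.tsum_mul_right]
  simp only [hleft, hright]
  rw [hs'.tsum_eq_zero_add]
  simp

theorem stmt14 (A B Y : E →L[ℂ] E) (A' : E →L[ℂ] E)
    (hA : A * A' = 1) (hA' : A' * A = 1)
    (ρ : ℝ) (hρ : 0 < ρ)
    (hspecA : ∀ z ∈ spectrum ℂ A, ρ < ‖z‖)
    (hspecB : ∀ z ∈ spectrum ℂ B, ‖z‖ < ρ) :
    Summable (fun n : ℕ => A' ^ (n + 1) * Y * B ^ n) ∧
    A * (∑' n : ℕ, A' ^ (n + 1) * Y * B ^ n)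
      - (∑' n : ℕ, A' ^ (n + 1) * Y * B ^ n) * B = Y := by
  lift ρ to ℝ≥0 using hρ.le
  let u : (E →L[ℂ] E)ˣ := ⟨A, A', hA, hA'⟩
  have hradA' : spectralRadius ℂ A' < ↑ρ⁻¹ :=
    spectralRadius_inv_lt (u := u) (mod_cast hρ) fun z hz => mod_cast hspecA z hz
  have hradB : spectralRadius ℂ B < ρ :=
    spectralRadius_lt_of_forall_nnnorm_lt (mod_cast hρ) fun z hz => mod_cast hspecB z hz
  have hsum : Summable fun n : ℕ => A' ^ (n + 1) * Y * B ^ n := by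
    simpa only [pow_succ, mul_assoc] using summable_pow_mul_mul_pow (A' * Y) hradA' hradB
  exact ⟨hsum, mul_tsum_sub_tsum_mul_eq hA hsum⟩
end

section
/- If A is a normal bounded operator on a Hilbert space, then for every bounded operator X, ‖I - (AX - XA)‖ ≥ 1 (Williams' inequality: the distance from the identity to the range of the inner derivation of a normal operator is at least 1). -/
/-! Shifting `A` by a point `μ` of its (nonempty) spectrum leaves the commutator `AX - XA`
unchanged and gives a normal operator `T = A - μ` that is not invertible. A normal operator
that is bounded below is invertible: its range is closed, with orthogonal complement its kernel;
so there are unit vectors `x` with `‖T x‖`, and by normality `‖T⋆ x‖`, arbitrarily small.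
For them `⟪x, (TX - XT) x⟫ = ⟪T⋆ x, X x⟫ - ⟪x, X T x⟫` is small while `⟪x, x⟫ = 1`, and
`‖1 - (TX - XT)‖ ≥ ‖⟪x, (1 - (TX - XT)) x⟫‖`. -/

open ContinuousLinearMap

variable {H : Type*} [NormedAddCommGroup H] [InnerProductSpace ℂ H] [CompleteSpace H]
  [Nontrivial H]

lemma IsStarNormal.sub_algebraMap {R A : Type*} [CommRing R] [StarRing R] [Ring A] [StarRing A]
    [Algebra R A] [StarModule R A] (a : A) [IsStarNormal a] (r : R) :
    IsStarNormal (a - algebraMap R A r) :=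
  have : IsStarNormal (algebraMap R A r) :=
    Algebra.algebraMap_eq_smul_one (A := A) r ▸ inferInstance
  (algebraMap_star_comm (A := A) r ▸ Algebra.commute_algebraMap_right (star r) a).isStarNormal_sub

lemma commutator_sub_algebraMap {R A : Type*} [CommRing R] [Ring A] [Algebra R A]
    (a x : A) (r : R) :
    (a - algebraMap R A r) * x - x * (a - algebraMap R A r) = a * x - x * a := by
  rw [sub_mul, mul_sub, Algebra.commutes]; abel

namespace ContinuousLinearMap

variable {𝕜 E : Type*} [RCLike 𝕜] [NormedAddCommGroup E] [InnerProductSpace 𝕜 E] [CompleteSpace E]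

open scoped InnerProductSpace

lemma IsStarNormal.isUnit_of_le_norm_apply {T : E →L[𝕜] E} (hT : IsStarNormal T) {c : ℝ}
    (hc : 0 < c) (h : ∀ x, c * ‖x‖ ≤ ‖T x‖) : IsUnit T := by
  obtain ⟨K, hK⟩ := antilipschitzWith_iff_exists_mul_le_norm.mpr ⟨c, hc, h⟩
  rw [isUnit_iff_bijective, bijective_iff_dense_range_and_antilipschitz,
    Submodule.topologicalClosure_eq_top_iff, hT.orthogonal_range]
  exact ⟨LinearMap.ker_eq_bot.mpr hK.injective, K, hK⟩

lemma IsStarNormal.exists_norm_eq_one_norm_apply_lt {T : E →L[𝕜] E} (hT : IsStarNormal T)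
    (hu : ¬IsUnit T) {ε : ℝ} (hε : 0 < ε) : ∃ x, ‖x‖ = 1 ∧ ‖T x‖ < ε := by
  by_contra! hlow
  refine hu (hT.isUnit_of_le_norm_apply hε fun x ↦ ?_)
  rcases eq_or_ne x 0 with rfl | hx
  · simp
  have := hlow _ (norm_smul_inv_norm (𝕜 := 𝕜) hx)
  rw [map_smul, norm_smul, norm_inv, RCLike.norm_ofReal, abs_norm, ← div_eq_inv_mul,
    le_div_iff₀ (norm_pos_iff.mpr hx)] at this
  exact this

lemma norm_inner_commutator_le (T X : E →L[𝕜] E) (x : E) :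
    ‖⟪x, (T * X - X * T) x⟫_𝕜‖ ≤ ‖X‖ * ‖x‖ * (‖adjoint T x‖ + ‖T x‖) := by
  rw [sub_apply, inner_sub_right, mul_apply_eq_comp, ← adjoint_inner_left, mul_apply_eq_comp]
  calc ‖⟪adjoint T x, X x⟫_𝕜 - ⟪x, X (T x)⟫_𝕜‖
      ≤ ‖adjoint T x‖ * (‖X‖ * ‖x‖) + ‖x‖ * (‖X‖ * ‖T x‖) := by
        refine (norm_sub_le _ _).trans (add_le_add ?_ ?_) <;>
        exact (norm_inner_le_norm _ _).trans (by gcongr; exact le_opNorm _ _)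
    _ = ‖X‖ * ‖x‖ * (‖adjoint T x‖ + ‖T x‖) := by ring

lemma IsStarNormal.one_le_norm_one_sub_commutator {T : E →L[𝕜] E} (hT : IsStarNormal T)
    (hu : ¬IsUnit T) (X : E →L[𝕜] E) : 1 ≤ ‖1 - (T * X - X * T)‖ := by
  refine le_of_forall_pos_le_add fun δ hδ ↦ ?_
  set ε := δ / (2 * (‖X‖ + 1))
  have hε : 0 < ε := by positivity
  obtain ⟨x, hx, hTx⟩ := hT.exists_norm_eq_one_norm_apply_lt hu hε
  have hT'x : ‖adjoint T x‖ < ε := (isStarNormal_iff_norm_eq_adjoint.mp hT x) ▸ hTx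
  have hx' : ⟪x, x⟫_𝕜 = 1 := by rw [inner_self_eq_norm_sq_to_K, hx]; simp
  set C := T * X - X * T
  calc (1 : ℝ) = ‖⟪x, (1 - C) x⟫_𝕜 + ⟪x, C x⟫_𝕜‖ := by
        rw [sub_apply, one_apply_eq_self, inner_sub_right, sub_add_cancel, hx', norm_one]
    _ ≤ ‖1 - C‖ + ‖X‖ * (ε + ε) := by
        refine (norm_add_le _ _).trans (add_le_add ?_ ?_)
        · simpa [hx] using norm_inner_le_norm (𝕜 := 𝕜) x ((1 - C) x) |>.trans
            (mul_le_mul_of_nonneg_left ((1 - C).le_opNorm x) (norm_nonneg _))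
        · refine (norm_inner_commutator_le T X x).trans ?_
          rw [hx, mul_one]
          gcongr
    _ ≤ ‖1 - C‖ + δ := by
        gcongr
        calc ‖X‖ * (ε + ε) = δ * (‖X‖ / (‖X‖ + 1)) := by
              simp only [ε]; field_simp; ring
          _ ≤ δ := mul_le_of_le_one_right hδ.le ((div_le_one (by positivity)).mpr (by linarith))

end ContinuousLinearMap

theorem stmt17 (A : H →L[ℂ] H) (hA : adjoint A * A = A * adjoint A) :
    ∀ X : H →L[ℂ] H, 1 ≤ ‖(1 : H →L[ℂ] H) - (A * X - X * A)‖ := by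
  intro X
  obtain ⟨μ, hμ⟩ := spectrum.nonempty A
  have : IsStarNormal A := ⟨hA⟩
  have hu : ¬IsUnit (A - algebraMap ℂ _ μ) := by
    rwa [← IsUnit.neg_iff, neg_sub, ← spectrum.mem_iff]
  simpa only [commutator_sub_algebraMap] using
    (IsStarNormal.sub_algebraMap A μ).one_le_norm_one_sub_commutator hu X
end
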